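/- (Lemma on the serial orbit in real time) Let Φ : 𝔹^n × 𝔹^m → 𝔹^n, Ψ : 𝔹^p × 𝔹^n → 𝔹^p, μ ∈ 𝔹^n, δ ∈ 𝔹^p, a signal u ∈ S^(m), and progressive functions ρ ∈ Pₙ, ρ̃ ∈ P_p. Then for all t ∈ ℝ: (Φ^ρ(μ,u,t), Ψ^ρ̃(δ, Φ^ρ(μ,u,·), t)) = (Ψ∗Φ)^(ρ,ρ̃)((μ,δ), u, t). That is, the pair formed by the orbit of Φ under excitation ρ and the orbit of Ψ under excitation ρ̃ driven by the first orbit equals the orbit of the serial composition Ψ∗Φ under excitation (ρ,ρ̃). -/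

import Mathlib

open Classical

/-- `Φ^ν` : the asynchronous (partial) application of `Φ` controlled by `ν`. -/
def phiNu {n m : ℕ} (Φ : (Fin n → Bool) → (Fin m → Bool) → (Fin n → Bool))
    (ν : Fin n → Bool) (μ : Fin n → Bool) (lam : Fin m → Bool) : Fin n → Bool :=
  fun i => xor (!(ν i) && μ i) (ν i && Φ μ lam i)

/-- `Ψ ∗ Φ` : the serial composition, identifying `𝔹^(n+p)` with `𝔹^n × 𝔹^p`. -/
def serial {n m p : ℕ}
    (Ψ : (Fin p → Bool) → (Fin n → Bool) → (Fin p → Bool))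
    (Φ : (Fin n → Bool) → (Fin m → Bool) → (Fin n → Bool))
    (μδ : (Fin n → Bool) × (Fin p → Bool)) (lam : Fin m → Bool) :
    (Fin n → Bool) × (Fin p → Bool) :=
  (Φ μδ.1 lam, Ψ μδ.2 (Φ μδ.1 lam))

/-- A signal: eventually-left-constant, piecewise constant over an unbounded
increasing sequence of switching times. -/
def IsSignal {α : Type*} (x : ℝ → α) : Prop :=
  ∃ (μ : α) (t : ℕ → ℝ), StrictMono t ∧ (∀ M : ℝ, ∃ k, M < t k) ∧
    (∀ s, s < t 0 → x s = μ) ∧ ∀ k, ∀ s, t k ≤ s → s < t (k + 1) → x s = x (t k)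

/-- A progressive function: supported on an unbounded increasing sequence, with
each coordinate equal to `1` infinitely often on the sequence. -/
def IsProgressive {n : ℕ} (ρ : ℝ → Fin n → Bool) : Prop :=
  ∃ t : ℕ → ℝ, StrictMono t ∧ (∀ M : ℝ, ∃ k, M < t k) ∧
    (∀ s, s ∉ Set.range t → ρ s = fun _ => false) ∧
    ∀ i : Fin n, {k : ℕ | ρ (t k) i = true}.Infinite

/-- The recursive state sequence `ω₀, ω₁, ...` of an orbit over the grid `T`. -/
def omegaSeq {S I E : Type*} (F : E → S → I → S) (μ : S) (u : ℝ → I) (ρ : ℝ → E)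
    (T : ℕ → ℝ) : ℕ → S
  | 0 => F (ρ (T 0)) μ (u (T 0))
  | k + 1 => F (ρ (T (k + 1))) (omegaSeq F μ u ρ T k) (u (T (k + 1)))

/-- The orbit over an explicit grid `T`: value `μ` before `T 0` and `ωₖ` on
`[T k, T (k+1))`. -/
noncomputable def orbitOn {S I E : Type*} (F : E → S → I → S) (μ : S) (u : ℝ → I)
    (ρ : ℝ → E) (T : ℕ → ℝ) : ℝ → S := fun t =>
  if t < T 0 then μ else omegaSeq F μ u ρ T (sInf {k : ℕ | t < T (k + 1)})

def IsGrid (T : ℕ → ℝ) : Prop := StrictMono T ∧ ∀ M : ℝ, ∃ k, M < T k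

/-- `u` admits a signal representation over the grid `T`. -/
def FitsGrid {α : Type*} (u : ℝ → α) (T : ℕ → ℝ) : Prop :=
  (∀ s s', s < T 0 → s' < T 0 → u s = u s') ∧
    ∀ k, ∀ s, T k ≤ s → s < T (k + 1) → u s = u (T k)

/-- `ρ` vanishes (equals `z`) outside the range of `T`. -/
def SupportedOn {E : Type*} (z : E) (ρ : ℝ → E) (T : ℕ → ℝ) : Prop :=
  ∀ s, s ∉ Set.range T → ρ s = z

/-- The orbit `Φ^ρ(μ,u,·)`, defined over some common grid fitting `u` and
supporting `ρ` (chosen by choice; the value is independent of the choice). -/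
noncomputable def orbit {S I E : Type*} (F : E → S → I → S) (z : E)
    (μ : S) (u : ℝ → I) (ρ : ℝ → E) : ℝ → S :=
  if h : ∃ T, IsGrid T ∧ FitsGrid u T ∧ SupportedOn z ρ T
  then orbitOn F μ u ρ h.choose else fun _ => μ

/-- The zero vector of `𝔹^n`. -/
def zeroB (n : ℕ) : Fin n → Bool := fun _ => false

/-- The transition family of the serial composition `Ψ ∗ Φ`, excited by pairs:
`(Ψ∗Φ)^(ν,ν̃) = Ψ^ν̃ ∗ Φ^ν`. -/
def serialNu {n m p : ℕ}
    (Ψ : (Fin p → Bool) → (Fin n → Bool) → (Fin p → Bool))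
    (Φ : (Fin n → Bool) → (Fin m → Bool) → (Fin n → Bool))
    (νν : (Fin n → Bool) × (Fin p → Bool)) :
    (Fin n → Bool) × (Fin p → Bool) → (Fin m → Bool) →
      (Fin n → Bool) × (Fin p → Bool) :=
  serial (phiNu Ψ νν.2) (phiNu Φ νν.1)

/-!
On a single grid refining the switching times of `u` and the supports of `ρ` and `ρ̃`, all
three orbits are computed by their recursions `ωₖ₊₁ = F(ωₖ, u(tₖ₊₁))`, and the serial
recursion is componentwise the recursion of `Φ` followed by that of `Ψ`, fed with the new
state of `Φ`, i.e. with the first orbit at `tₖ`. Two grids can always be merged, and the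
orbit does not depend on the grid: grid points outside the support of the excitation are
idle steps (`Φ^0 = id`), so the orbit at `t` is the fold of the steps at the support points
`≤ t`, taken in increasing order.
-/

theorem lt_apply_zero_of_forall_le_iff {T : ℕ → ℝ} {t : ℝ} (h : ∀ i, T i ≤ t ↔ i < 0) :
    t < T 0 :=
  not_le.1 fun h0 => Nat.not_lt_zero 0 ((h 0).1 h0)

theorem mem_Ico_of_forall_le_iff {T : ℕ → ℝ} {t : ℝ} {k : ℕ} (h : ∀ i, T i ≤ t ↔ i < k + 1) :
    t ∈ Set.Ico (T k) (T (k + 1)) :=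
  ⟨(h k).2 k.lt_succ_self, not_le.1 fun h1 => lt_irrefl _ ((h _).1 h1)⟩

namespace IsGrid

variable {T : ℕ → ℝ}

theorem exists_forall_le_iff_lt (hT : IsGrid T) (t : ℝ) : ∃ j, ∀ i, T i ≤ t ↔ i < j := by
  refine ⟨Nat.find (hT.2 t), fun i => ⟨fun hi => ?_, fun hi => not_lt.1 (Nat.find_min _ hi)⟩⟩
  by_contra! hji
  exact (Nat.find_spec (hT.2 t)).not_ge ((hT.1.monotone hji).trans hi)

theorem finite_range_inter_Iic (hT : IsGrid T) (x : ℝ) : (Set.range T ∩ Set.Iic x).Finite := by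
  obtain ⟨K, hK⟩ := hT.2 x
  refine ((Set.finite_Iio K).image T).subset ?_
  rintro _ ⟨⟨i, rfl⟩, hi⟩
  exact ⟨i, hT.1.lt_iff_lt.1 (lt_of_le_of_lt hi hK), rfl⟩

theorem mem_range_of_step_le (hT : IsGrid T) {y : ℝ} (h0 : T 0 ≤ y)
    (hstep : ∀ k, T k < y → T (k + 1) ≤ y) : y ∈ Set.range T := by
  obtain ⟨j, hj⟩ := hT.exists_forall_le_iff_lt y
  obtain _ | k := j
  · exact absurd (lt_apply_zero_of_forall_le_iff hj) (not_lt.2 h0)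
  · obtain ⟨h1, h2⟩ := mem_Ico_of_forall_le_iff hj
    exact ⟨k, h1.eq_or_lt.resolve_right fun hlt => h2.not_ge (hstep k hlt)⟩

end IsGrid

noncomputable def nextPoint (T : ℕ → ℝ) (x : ℝ) : ℝ := T (sInf {i | x < T i})

theorem lt_nextPoint {T : ℕ → ℝ} (hT : IsGrid T) (x : ℝ) : x < nextPoint T x :=
  Nat.sInf_mem (hT.2 x)

theorem nextPoint_le {T : ℕ → ℝ} (hT : IsGrid T) {x : ℝ} {i : ℕ} (hi : x < T i) :
    nextPoint T x ≤ T i :=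
  hT.1.monotone (Nat.sInf_le hi)

/-- The increasing enumeration of `range T₁ ∪ range T₂`. -/
noncomputable def mergeGrid (T₁ T₂ : ℕ → ℝ) : ℕ → ℝ
  | 0 => min (T₁ 0) (T₂ 0)
  | k + 1 => min (nextPoint T₁ (mergeGrid T₁ T₂ k)) (nextPoint T₂ (mergeGrid T₁ T₂ k))

section mergeGrid

variable {T₁ T₂ : ℕ → ℝ}

theorem mergeGrid_mem (k : ℕ) : mergeGrid T₁ T₂ k ∈ Set.range T₁ ∪ Set.range T₂ := by
  cases k <;> exact (min_choice _ _).imp (⟨_, ·.symm⟩) (⟨_, ·.symm⟩)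

theorem strictMono_mergeGrid (h₁ : IsGrid T₁) (h₂ : IsGrid T₂) : StrictMono (mergeGrid T₁ T₂) :=
  strictMono_nat_of_lt_succ fun _ => lt_min (lt_nextPoint h₁ _) (lt_nextPoint h₂ _)

theorem isGrid_mergeGrid (h₁ : IsGrid T₁) (h₂ : IsGrid T₂) : IsGrid (mergeGrid T₁ T₂) := by
  refine ⟨strictMono_mergeGrid h₁ h₂, fun x => ?_⟩
  by_contra! hle
  have hfin := (h₁.finite_range_inter_Iic x).union (h₂.finite_range_inter_Iic x)
  refine Set.infinite_range_of_injective (strictMono_mergeGrid h₁ h₂).injective (hfin.subset ?_)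
  rintro _ ⟨k, rfl⟩
  exact (mergeGrid_mem k).imp (⟨·, hle k⟩) (⟨·, hle k⟩)

theorem range_subset_range_mergeGrid_left (h₁ : IsGrid T₁) (h₂ : IsGrid T₂) :
    Set.range T₁ ⊆ Set.range (mergeGrid T₁ T₂) := by
  rintro _ ⟨i, rfl⟩
  refine (isGrid_mergeGrid h₁ h₂).mem_range_of_step_le
    ((min_le_left _ _).trans (h₁.1.monotone i.zero_le)) fun k hk => ?_
  exact (min_le_left _ _).trans (nextPoint_le h₁ hk)

theorem range_subset_range_mergeGrid_right (h₁ : IsGrid T₁) (h₂ : IsGrid T₂) :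
    Set.range T₂ ⊆ Set.range (mergeGrid T₁ T₂) := by
  rintro _ ⟨i, rfl⟩
  refine (isGrid_mergeGrid h₁ h₂).mem_range_of_step_le
    ((min_le_right _ _).trans (h₂.1.monotone i.zero_le)) fun k hk => ?_
  exact (min_le_right _ _).trans (nextPoint_le h₂ hk)

theorem exists_isGrid_range_subset (h₁ : IsGrid T₁) (h₂ : IsGrid T₂) :
    ∃ T, IsGrid T ∧ Set.range T₁ ⊆ Set.range T ∧ Set.range T₂ ⊆ Set.range T :=
  ⟨mergeGrid T₁ T₂, isGrid_mergeGrid h₁ h₂, range_subset_range_mergeGrid_left h₁ h₂,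
    range_subset_range_mergeGrid_right h₁ h₂⟩

end mergeGrid

theorem FitsGrid.eq_of_forall_le_iff {α : Type*} {u : ℝ → α} {T : ℕ → ℝ} (hT : IsGrid T)
    (hu : FitsGrid u T) {s s' : ℝ} (h : ∀ i, T i ≤ s ↔ T i ≤ s') : u s = u s' := by
  obtain ⟨j, hj⟩ := hT.exists_forall_le_iff_lt s
  have hj' : ∀ i, T i ≤ s' ↔ i < j := fun i => (h i).symm.trans (hj i)
  obtain _ | k := j
  · exact hu.1 s s' (lt_apply_zero_of_forall_le_iff hj) (lt_apply_zero_of_forall_le_iff hj')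
  · obtain ⟨h1, h2⟩ := mem_Ico_of_forall_le_iff hj
    obtain ⟨h1', h2'⟩ := mem_Ico_of_forall_le_iff hj'
    rw [hu.2 k s h1 h2, hu.2 k s' h1' h2']

theorem FitsGrid.mono {α : Type*} {u : ℝ → α} {T T' : ℕ → ℝ} (hT : IsGrid T) (hT' : IsGrid T')
    (hsub : Set.range T ⊆ Set.range T') (hu : FitsGrid u T) : FitsGrid u T' := by
  have hcell : ∀ k s, T' k ≤ s → s < T' (k + 1) → ∀ i, T i ≤ s ↔ T i ≤ T' k := by
    intro k s h1 h2 i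
    obtain ⟨j, hj⟩ := hsub ⟨i, rfl⟩
    rw [← hj]
    refine ⟨fun hjs => hT'.1.monotone ?_, fun hjk => hjk.trans h1⟩
    exact Nat.lt_succ_iff.1 (hT'.1.lt_iff_lt.1 (lt_of_le_of_lt hjs h2))
  refine ⟨fun s s' hs hs' => hu.eq_of_forall_le_iff hT fun i => ?_,
    fun k s h1 h2 => hu.eq_of_forall_le_iff hT (hcell k s h1 h2)⟩
  obtain ⟨j, hj⟩ := hsub ⟨i, rfl⟩
  have h0 : T' 0 ≤ T i := hj ▸ hT'.1.monotone j.zero_le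
  exact iff_of_false (not_le.2 (hs.trans_le h0)) (not_le.2 (hs'.trans_le h0))

theorem SupportedOn.mono {E : Type*} {z : E} {ρ : ℝ → E} {T T' : ℕ → ℝ}
    (hsub : Set.range T ⊆ Set.range T') (hρ : SupportedOn z ρ T) : SupportedOn z ρ T' :=
  fun s hs => hρ s fun h => hs (hsub h)

theorem SupportedOn.prod {E E' : Type*} {z : E} {z' : E'} {ρ : ℝ → E} {ρ' : ℝ → E'}
    {T : ℕ → ℝ} (hρ : SupportedOn z ρ T) (hρ' : SupportedOn z' ρ' T) :
    SupportedOn (z, z') (fun s => (ρ s, ρ' s)) T :=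
  fun s hs => Prod.ext (hρ s hs) (hρ' s hs)

theorem IsSignal.exists_fitsGrid {α : Type*} {u : ℝ → α} (hu : IsSignal u) :
    ∃ T, IsGrid T ∧ FitsGrid u T := by
  obtain ⟨μ, T, hmono, hunb, hbefore, hcell⟩ := hu
  exact ⟨T, ⟨hmono, hunb⟩, fun s s' hs hs' => (hbefore s hs).trans (hbefore s' hs').symm, hcell⟩

theorem IsProgressive.exists_supportedOn {n : ℕ} {ρ : ℝ → Fin n → Bool} (hρ : IsProgressive ρ) :
    ∃ T, IsGrid T ∧ SupportedOn (zeroB n) ρ T := by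
  obtain ⟨T, hmono, hunb, hsupp, -⟩ := hρ
  exact ⟨T, ⟨hmono, hunb⟩, hsupp⟩

theorem List.foldl_filter_eq_foldl {α β : Type*} (f : β → α → β) (p : α → Bool)
    (hf : ∀ b a, p a = false → f b a = b) (l : List α) (b : β) :
    (l.filter p).foldl f b = l.foldl f b := by
  induction l generalizing b with
  | nil => rfl
  | cons a l ih =>
    cases hp : p a
    · rw [List.filter_cons_of_neg (by simp [hp]), List.foldl_cons, hf b a hp, ih]
    · rw [List.filter_cons_of_pos hp, List.foldl_cons, List.foldl_cons, ih]

theorem pairwise_lt_filter_map_range {T : ℕ → ℝ} (hT : StrictMono T) (p : ℝ → Bool) (j : ℕ) :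
    (((List.range j).map T).filter p).Pairwise (· < ·) :=
  (List.pairwise_map.2 (List.pairwise_lt_range.imp fun h => hT h)).sublist List.filter_sublist

section orbitOn

variable {S I E : Type*} (F : E → S → I → S) (μ : S) (u : ℝ → I) (ρ : ℝ → E) {T : ℕ → ℝ}

theorem omegaSeq_eq_foldl (T : ℕ → ℝ) (k : ℕ) :
    omegaSeq F μ u ρ T k =
      ((List.range (k + 1)).map T).foldl (fun ω s => F (ρ s) ω (u s)) μ := by
  induction k with
  | zero => rfl
  | succ k ih => rw [List.range_succ, List.map_append, List.foldl_append, ← ih]; rfl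

theorem orbitOn_of_lt {t : ℝ} (h : t < T 0) : orbitOn F μ u ρ T t = μ := if_pos h

theorem orbitOn_of_mem_Ico (hT : IsGrid T) {t : ℝ} {k : ℕ}
    (ht : t ∈ Set.Ico (T k) (T (k + 1))) : orbitOn F μ u ρ T t = omegaSeq F μ u ρ T k := by
  obtain ⟨h1, h2⟩ := ht
  have hk : sInf {j | t < T (j + 1)} = k :=
    le_antisymm (Nat.sInf_le h2) (le_csInf ⟨k, h2⟩ fun j hj =>
      Nat.lt_succ_iff.1 (hT.1.lt_iff_lt.1 (lt_of_le_of_lt h1 hj)))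
  rw [orbitOn, if_neg (not_lt.2 ((hT.1.monotone k.zero_le).trans h1)), hk]

theorem orbitOn_apply (hT : IsGrid T) (k : ℕ) : orbitOn F μ u ρ T (T k) = omegaSeq F μ u ρ T k :=
  orbitOn_of_mem_Ico F μ u ρ hT ⟨le_rfl, hT.1 k.lt_succ_self⟩

theorem fitsGrid_orbitOn (hT : IsGrid T) : FitsGrid (orbitOn F μ u ρ T) T :=
  ⟨fun _ _ hs hs' => (orbitOn_of_lt F μ u ρ hs).trans (orbitOn_of_lt F μ u ρ hs').symm,
    fun k _ h1 h2 =>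
      (orbitOn_of_mem_Ico F μ u ρ hT ⟨h1, h2⟩).trans (orbitOn_apply F μ u ρ hT k).symm⟩

theorem orbitOn_eq_foldl (hT : IsGrid T) {t : ℝ} {j : ℕ} (hj : ∀ i, T i ≤ t ↔ i < j) :
    orbitOn F μ u ρ T t = ((List.range j).map T).foldl (fun ω s => F (ρ s) ω (u s)) μ := by
  obtain _ | k := j
  · exact orbitOn_of_lt F μ u ρ (lt_apply_zero_of_forall_le_iff hj)
  · rw [orbitOn_of_mem_Ico F μ u ρ hT (mem_Ico_of_forall_le_iff hj), omegaSeq_eq_foldl]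

variable {F ρ} {z : E}

theorem mem_filter_map_range_iff (hρ : SupportedOn z ρ T) {t : ℝ} {j : ℕ}
    (hj : ∀ i, T i ≤ t ↔ i < j) (s : ℝ) :
    s ∈ ((List.range j).map T).filter (fun s => ρ s ≠ z) ↔ ρ s ≠ z ∧ s ≤ t := by
  simp only [List.mem_filter, List.mem_map, List.mem_range, decide_eq_true_eq]
  constructor
  · rintro ⟨⟨i, hi, rfl⟩, hz⟩
    exact ⟨hz, (hj i).2 hi⟩
  · rintro ⟨hz, hs⟩
    obtain ⟨i, rfl⟩ : s ∈ Set.range T := by_contra fun h => hz (hρ s h)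
    exact ⟨⟨i, (hj i).1 hs, rfl⟩, hz⟩

theorem orbitOn_congr_grid (hz : ∀ σ i, F z σ i = σ) {T' : ℕ → ℝ} (hT : IsGrid T)
    (hT' : IsGrid T') (hρ : SupportedOn z ρ T) (hρ' : SupportedOn z ρ T') :
    orbitOn F μ u ρ T = orbitOn F μ u ρ T' := by
  funext t
  obtain ⟨j, hj⟩ := hT.exists_forall_le_iff_lt t
  obtain ⟨j', hj'⟩ := hT'.exists_forall_le_iff_lt t
  have hidle : ∀ ω s, decide (ρ s ≠ z) = false → F (ρ s) ω (u s) = ω := fun ω s hs => by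
    rw [not_not.1 (of_decide_eq_false hs), hz]
  rw [orbitOn_eq_foldl F μ u ρ hT hj, orbitOn_eq_foldl F μ u ρ hT' hj',
    ← List.foldl_filter_eq_foldl _ _ hidle ((List.range j).map T),
    ← List.foldl_filter_eq_foldl _ _ hidle ((List.range j').map T'),
    (pairwise_lt_filter_map_range hT.1 _ j).eq_of_mem_iff
      (pairwise_lt_filter_map_range hT'.1 _ j') fun s => by
      rw [mem_filter_map_range_iff hρ hj, mem_filter_map_range_iff hρ' hj']]

theorem orbit_eq_orbitOn (hz : ∀ σ i, F z σ i = σ) (hT : IsGrid T) (hu : FitsGrid u T)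
    (hρ : SupportedOn z ρ T) : orbit F z μ u ρ = orbitOn F μ u ρ T := by
  have h : ∃ T, IsGrid T ∧ FitsGrid u T ∧ SupportedOn z ρ T := ⟨T, hT, hu, hρ⟩
  rw [orbit, dif_pos h]
  exact orbitOn_congr_grid μ u hz h.choose_spec.1 hT h.choose_spec.2.2 hρ

end orbitOn

theorem phiNu_zeroB {n m : ℕ} (Φ : (Fin n → Bool) → (Fin m → Bool) → (Fin n → Bool))
    (μ : Fin n → Bool) (lam : Fin m → Bool) : phiNu Φ (zeroB n) μ lam = μ := by
  funext i
  simp [phiNu, zeroB]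

theorem serialNu_zeroB {n m p : ℕ} (Ψ : (Fin p → Bool) → (Fin n → Bool) → (Fin p → Bool))
    (Φ : (Fin n → Bool) → (Fin m → Bool) → (Fin n → Bool))
    (μδ : (Fin n → Bool) × (Fin p → Bool)) (lam : Fin m → Bool) :
    serialNu Ψ Φ (zeroB n, zeroB p) μδ lam = μδ := by
  simp only [serialNu, serial, phiNu_zeroB]

theorem orbitOn_serialNu {n m p : ℕ} (Φ : (Fin n → Bool) → (Fin m → Bool) → (Fin n → Bool))
    (Ψ : (Fin p → Bool) → (Fin n → Bool) → (Fin p → Bool)) (μ : Fin n → Bool)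
    (δ : Fin p → Bool) (u : ℝ → Fin m → Bool) (ρ : ℝ → Fin n → Bool) (ρ' : ℝ → Fin p → Bool)
    {T : ℕ → ℝ} (hT : IsGrid T) (t : ℝ) :
    orbitOn (serialNu Ψ Φ) (μ, δ) u (fun s => (ρ s, ρ' s)) T t =
      (orbitOn (phiNu Φ) μ u ρ T t,
        orbitOn (phiNu Ψ) δ (orbitOn (phiNu Φ) μ u ρ T) ρ' T t) := by
  have hseq : ∀ k, omegaSeq (serialNu Ψ Φ) (μ, δ) u (fun s => (ρ s, ρ' s)) T k =
      (omegaSeq (phiNu Φ) μ u ρ T k,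
        omegaSeq (phiNu Ψ) δ (orbitOn (phiNu Φ) μ u ρ T) ρ' T k) := by
    intro k
    induction k with
    | zero => simp only [omegaSeq, orbitOn_apply _ _ _ _ hT 0]; rfl
    | succ k ih => simp only [omegaSeq, ih, orbitOn_apply _ _ _ _ hT (k + 1)]; rfl
  obtain ⟨j, hj⟩ := hT.exists_forall_le_iff_lt t
  obtain _ | k := j
  · simp only [orbitOn_of_lt _ _ _ _ (lt_apply_zero_of_forall_le_iff hj)]
  · simp only [orbitOn_of_mem_Ico _ _ _ _ hT (mem_Ico_of_forall_le_iff hj), hseq]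

/-- serial orbit lemma in real time: the pair of the orbit of `Φ`
under `ρ` and the orbit of `Ψ` under `ρ̃` driven by the first orbit equals the
orbit of the serial composition `Ψ∗Φ` under the excitation `(ρ,ρ̃)`. -/
theorem serial_orbit_real_time {n m p : ℕ}
    (Φ : (Fin n → Bool) → (Fin m → Bool) → (Fin n → Bool))
    (Ψ : (Fin p → Bool) → (Fin n → Bool) → (Fin p → Bool))
    (μ : Fin n → Bool) (δ : Fin p → Bool)
    (u : ℝ → Fin m → Bool) (ρ : ℝ → Fin n → Bool) (ρ' : ℝ → Fin p → Bool)
    (hu : IsSignal u) (hρ : IsProgressive ρ) (hρ' : IsProgressive ρ') :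
    ∀ t : ℝ,
      (orbit (phiNu Φ) (zeroB n) μ u ρ t,
        orbit (phiNu Ψ) (zeroB p) δ (orbit (phiNu Φ) (zeroB n) μ u ρ) ρ' t) =
      orbit (serialNu Ψ Φ) (zeroB n, zeroB p) (μ, δ) u (fun s => (ρ s, ρ' s)) t := by
  obtain ⟨Tu, hTu, hfit⟩ := hu.exists_fitsGrid
  obtain ⟨Tρ, hTρ, hsupp⟩ := hρ.exists_supportedOn
  obtain ⟨Tρ', hTρ', hsupp'⟩ := hρ'.exists_supportedOn
  obtain ⟨T₀, hT₀, hTuT₀, hTρT₀⟩ := exists_isGrid_range_subset hTu hTρ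
  obtain ⟨T, hT, hT₀T, hTρ'T⟩ := exists_isGrid_range_subset hT₀ hTρ'
  have hfitT : FitsGrid u T := hfit.mono hTu hT (hTuT₀.trans hT₀T)
  have hsuppT : SupportedOn (zeroB n) ρ T := hsupp.mono (hTρT₀.trans hT₀T)
  have hsuppT' : SupportedOn (zeroB p) ρ' T := hsupp'.mono hTρ'T
  intro t
  rw [orbit_eq_orbitOn μ u (phiNu_zeroB Φ) hT hfitT hsuppT,
    orbit_eq_orbitOn δ _ (phiNu_zeroB Ψ) hT (fitsGrid_orbitOn _ μ u ρ hT) hsuppT',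
    orbit_eq_orbitOn (μ, δ) u (serialNu_zeroB Ψ Φ) hT hfitT (hsuppT.prod hsuppT'),
    orbitOn_serialNu Φ Ψ μ δ u ρ ρ' hT t]
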